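/- Let (R, m) be an approximately Gorenstein Noetherian local ring with a sequence {I_t} of m-primary irreducible ideals cofinal with the powers of m such that there are injections R/I_t → R/I_{t+1} sending the socle generator to the socle generator; let u_t ∈ R represent a socle generator of R/I_t. If M is a finitely generated R-module with no nonzero free direct summand, then there exists t_0 > 0 such that u_t M ⊆ I_t M for all t ≥ t_0. -/

import Mathlib

open Filter IsLocalRing

universe u

section FrobeniusTwist

/-- For a ring `R` of prime characteristic `p`, `FrobTwist R p e` is the ring `R^{1/p^e}` of
`p^e`-th roots of elements of `R`, realized as the ring `R` itself, viewed as an `R`-algebra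
via the `e`-th iterate of the Frobenius endomorphism (so `r • x = r^{p^e} * x`). -/
def FrobTwist (R : Type u) [CommRing R] (p e : ℕ) : Type u := R

variable (R : Type u) [CommRing R] (p : ℕ) [Fact p.Prime] [CharP R p]

instance (e : ℕ) : CommRing (FrobTwist R p e) := inferInstanceAs (CommRing R)

/-- The identity map of `R`, viewed as a map `R → R^{1/p^e}` (sending `r` to `r`,
i.e. to `(r^{p^e})^{1/p^e}`). -/
def FrobTwist.of (e : ℕ) : R →+* FrobTwist R p e := RingHom.id R

instance (e : ℕ) : Module R (FrobTwist R p e) :=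
  Module.compHom (FrobTwist R p e) ((FrobTwist.of R p e).comp (iterateFrobenius R p e))

/-- `R` is `F`-finite: `R^{1/p}` is a finitely generated `R`-module. -/
def FFinite : Prop := Module.Finite R (FrobTwist R p 1)

end FrobeniusTwist

section Summands

variable (R : Type u) [CommRing R]

/-- An `R`-module `M` has no nonzero free direct summand. (For a finitely generated module over a
local ring this is equivalent to the nonexistence of a surjective linear map `M → R`.) -/
def NoFreeSummand (M : Type u) [AddCommGroup M] [Module R M] : Prop :=
  ¬ ∃ f : M →ₗ[R] R, Function.Surjective f

variable (p : ℕ) [Fact p.Prime] [CharP R p]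

/-- `a` is the number of `R`-free direct summands in a direct sum decomposition
`R^{1/p^e} ≅ R^a ⊕ M` where `M` has no nonzero free direct summand. -/
def IsFreeSummandCount (e a : ℕ) : Prop :=
  ∃ (M : Type u) (_ : AddCommGroup M) (_ : Module R M),
    NoFreeSummand R M ∧ Nonempty (FrobTwist R p e ≃ₗ[R] ((Fin a → R) × M))

/-- `R` is strongly `F`-regular: for every `c` not in any minimal prime, the inclusion
`R·c^{1/q} ⊆ R^{1/q}` of `R`-modules splits for all `q = p^e` large. -/
def StronglyFRegular : Prop :=
  ∀ c : R, (∀ P ∈ minimalPrimes R, c ∉ P) →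
    ∃ e₀ : ℕ, ∀ e ≥ e₀, ∃ g : FrobTwist R p e →ₗ[R] R, g (FrobTwist.of R p e c) = 1

end Summands

section CharPInstances

theorem charP_of_ringHom_of_prime {R S : Type*} [CommRing R] [CommRing S] [Nontrivial S]
    (f : R →+* S) (p : ℕ) [hp : Fact p.Prime] [CharP R p] : CharP S p := by
  have hp0 : (p : S) = 0 := by
    rw [← map_natCast f p, CharP.cast_eq_zero R p, map_zero]
  refine ringChar.of_eq (Or.resolve_left ((Nat.dvd_prime hp.1).1 (ringChar.dvd hp0)) fun h1 => ?_)
  haveI := ringChar.of_eq h1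
  haveI := CharP.CharOne.subsingleton (R := S)
  exact one_ne_zero (α := S) (Subsingleton.elim _ _)

instance (R : Type u) [CommRing R] [IsLocalRing R] (p : ℕ) [Fact p.Prime] [CharP R p] :
    CharP (ResidueField R) p :=
  charP_of_ringHom_of_prime (residue R) p

instance (R : Type u) [CommRing R] (P : Ideal R) [P.IsPrime] (p : ℕ) [Fact p.Prime] [CharP R p] :
    CharP (Localization.AtPrime P) p :=
  charP_of_ringHom_of_prime (algebraMap R (Localization.AtPrime P)) p

end CharPInstances




section Length

/-- The length of an `R`-module `M`, as an element of `ℕ∞`: the supremum of lengths of chains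
of submodules of `M`. -/
noncomputable def moduleLength (R M : Type*) [Ring R] [AddCommGroup M] [Module R M] : ℕ∞ :=
  (Order.krullDim (Submodule R M)).unbotD 0

end Length

section FrobPow

/-- The `q = p^e`-th Frobenius power `I^{[q]}` of an ideal `I`: the ideal generated by the
`p^e`-th powers of the elements of `I`. -/
def Ideal.frobPow {R : Type*} [CommRing R] (p e : ℕ) (I : Ideal R) : Ideal R :=
  Ideal.span ((· ^ p ^ e) '' (I : Set R))

end FrobPow

section Excellent

/-- An ideal is irreducible if it is not the intersection of two ideals strictly containing it;
equivalently, whenever it is written as an intersection of two ideals, it equals one of them. -/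
def IsIrreducibleIdeal {A : Type*} [CommRing A] (I : Ideal A) : Prop :=
  ∀ J K : Ideal A, I = J ⊓ K → I = J ∨ I = K

/-- A ring is catenary if any two saturated chains of prime ideals with the same endpoints
have the same length. -/
def Ring.IsCatenary (A : Type*) [CommRing A] : Prop :=
  ∀ c₁ c₂ : LTSeries (PrimeSpectrum A), c₁.head = c₂.head → c₁.last = c₂.last →
    (∀ i : Fin c₁.length, c₁.toFun i.castSucc ⋖ c₁.toFun i.succ) →
    (∀ i : Fin c₂.length, c₂.toFun i.castSucc ⋖ c₂.toFun i.succ) →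
    c₁.length = c₂.length

/-- A (commutative, Noetherian) ring is regular local if it is a Noetherian local ring whose
maximal ideal (= the ideal of nonunits) is generated by `dim A` elements. -/
def IsRegularLocalRing' (A : Type u) [CommRing A] : Prop :=
  IsNoetherianRing A ∧
    ∃ s : Finset A, (∀ x : A, x ∈ Ideal.span (s : Set A) ↔ x ∈ nonunits A) ∧
      (s.card : WithBot ℕ∞) = ringKrullDim A

/-- A ring is regular if it is Noetherian and all its localizations at primes are regular local
rings. -/
def IsRegularRing' (A : Type u) [CommRing A] : Prop :=
  IsNoetherianRing A ∧
    ∀ P : PrimeSpectrum A, IsRegularLocalRing' (Localization.AtPrime P.asIdeal)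

/-- An algebra `A` over a field `k` is geometrically regular if `L ⊗[k] A` is a regular ring
for every finite field extension `L` of `k`. -/
def Algebra.IsGeometricallyRegular (k A : Type u) [Field k] [CommRing A] [Algebra k A] : Prop :=
  ∀ (L : Type u) [Field L] [Algebra k L], Module.Finite k L →
    IsRegularRing' (TensorProduct k L A)

/-- The residue field `k(P)` of a prime `P`. -/
noncomputable abbrev primeResidueField {R : Type u} [CommRing R] (P : Ideal R) [P.IsPrime] :
    Type u :=
  ResidueField (Localization.AtPrime P)

/-- A Noetherian local ring is excellent if it is universally catenary, its formal fibers (the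
fibers of the map to its completion) are geometrically regular, and every finitely generated
algebra over it has open regular locus (the J-2 condition). -/
def IsExcellentLocalRing (R : Type u) [CommRing R] [IsLocalRing R] : Prop :=
  IsNoetherianRing R ∧
  (∀ (B : Type u) [CommRing B] [Algebra R B], Algebra.FiniteType R B → Ring.IsCatenary B) ∧
  (∀ (P : Ideal R) (hP : P.IsPrime),
    Algebra.IsGeometricallyRegular (primeResidueField P)
      (TensorProduct R (primeResidueField P) (AdicCompletion (maximalIdeal R) R))) ∧
  (∀ (B : Type u) [CommRing B] [Algebra R B], Algebra.FiniteType R B →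
    IsOpen {Q : PrimeSpectrum B | IsRegularLocalRing' (Localization.AtPrime Q.asIdeal)})

end Excellent

section CM

/-- A local ring is Cohen–Macaulay if some system of parameters (a family of `dim R` elements
generating an ideal whose radical is the maximal ideal) is a regular sequence. -/
def IsCohenMacaulayLocalRing (A : Type u) [CommRing A] [IsLocalRing A] : Prop :=
  ∃ xs : List A, RingTheory.Sequence.IsRegular A xs ∧
    (Ideal.ofList xs).radical = maximalIdeal A ∧
    (xs.length : WithBot ℕ∞) = ringKrullDim A

/-- A local ring is Gorenstein if it is Cohen–Macaulay and some system of parameters generates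
an irreducible ideal. -/
def IsGorensteinLocalRing (A : Type u) [CommRing A] [IsLocalRing A] : Prop :=
  ∃ xs : List A, RingTheory.Sequence.IsRegular A xs ∧
    (Ideal.ofList xs).radical = maximalIdeal A ∧
    (xs.length : WithBot ℕ∞) = ringKrullDim A ∧
    IsIrreducibleIdeal (Ideal.ofList xs)

/-- A Noetherian local ring is approximately Gorenstein if there is a sequence of `m`-primary
irreducible ideals cofinal with the powers of the maximal ideal. -/
def IsApproximatelyGorenstein (R : Type u) [CommRing R] [IsLocalRing R] : Prop :=
  ∃ I : ℕ → Ideal R,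
    (∀ t, (I t).radical = maximalIdeal R ∧ IsIrreducibleIdeal (I t)) ∧
    ∀ n : ℕ, ∃ t₀, ∀ t ≥ t₀, I t ≤ maximalIdeal R ^ n

end CM

section TightClosure

/-- `x` lies in the tight closure of the ideal `I`: there is `c` not in any minimal prime with
`c x^q ∈ I^{[q]}` for all large `q = p^e`. -/
def Ideal.memTightClosure {R : Type u} [CommRing R] (p : ℕ) (I : Ideal R) (x : R) : Prop :=
  ∃ c : R, (∀ P ∈ minimalPrimes R, c ∉ P) ∧
    ∃ e₀ : ℕ, ∀ e ≥ e₀, c * x ^ p ^ e ∈ I.frobPow p e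

/-- `R` is weakly `F`-regular: every ideal is tightly closed. -/
def WeaklyFRegular (R : Type u) [CommRing R] (p : ℕ) : Prop :=
  ∀ (I : Ideal R) (x : R), I.memTightClosure p x → x ∈ I

end TightClosure

section Hull

/-- `ι : K →ₗ[R] E` exhibits `E` as an injective hull of `K`: `E` is injective and `ι` is an
injective map with essential image. -/
def IsInjectiveHull (R : Type u) [CommRing R] {K E : Type u}
    [AddCommGroup K] [Module R K] [AddCommGroup E] [Module R E] (ι : K →ₗ[R] E) : Prop :=
  Module.Injective R E ∧ Function.Injective ι ∧
    ∀ N : Submodule R E, N ≠ ⊥ → N ⊓ LinearMap.range ι ≠ ⊥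

end Hull


section PDegree

/-- The degree `[k : k^p]` of the residue field of a local ring `R` over its subfield of `p`-th
powers, computed as the rank of `k^{1/p}` over `k`;  `α(R) = log_p [k : k^p]`. -/
noncomputable def residueFieldPDegree (R : Type u) [CommRing R] [IsLocalRing R] (p : ℕ)
    [Fact p.Prime] [CharP R p] : ℕ :=
  Module.finrank (ResidueField R) (FrobTwist (ResidueField R) p 1)

end PDegree

/-!
If the conclusion failed, the increasing chain of submodules `{y ∈ M | u_t y ∈ I_t M}` (increasing
because of the compatible embeddings `R/I_t → R/I_{t+1}`) would stabilise at a proper submodule, so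
some `y` satisfies `u_t y ∉ I_t M` for every `t`. Since `u_t` lies in every ideal strictly larger
than the irreducible ideal `I_t`, the map `r ↦ r y` then embeds `R/I_t` into `M/I_t M`. Being an
Artinian local ring with simple socle, `R/I_t` is self-injective, so the embedding splits and there
is a map `M → R/I_t` sending `y` to `1`. Taking `I_t ⊆ m^k`, these maps solve modulo `m^k` the
finite linear system describing maps `M → R` with `y ↦ 1`, and Krull's intersection theorem makes
it solvable over `R`, producing a surjection `M → R`.
-/

section SelfInjective

variable {A : Type*} [CommRing A]

theorem Ideal.le_annihilator_annihilator (J : Ideal A) : J ≤ J.annihilator.annihilator :=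
  fun x hx ↦ Submodule.mem_annihilator.mpr fun r hr ↦ by
    rw [smul_eq_mul, mul_comm]
    exact Submodule.mem_annihilator.mp hr x hx

variable [IsLocalRing A] {u : A}

theorem CovBy.mul_mem_of_mem_maximalIdeal {W V : Ideal A} (h : W ⋖ V) {c x : A}
    (hc : c ∈ maximalIdeal A) (hx : x ∈ V) : c * x ∈ W := by
  by_contra hcx
  have hxW : x ∉ W := fun hxW ↦ hcx (W.mul_mem_left c hxW)
  have hspan : W ⊔ Ideal.span {c * x} = V :=
    (h.eq_or_eq le_sup_left (sup_le h.le ((Ideal.span_singleton_le_iff_mem V).mpr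
      (V.mul_mem_left c hx)))).resolve_left
      fun he ↦ hcx (he ▸ Ideal.mem_sup_right (Ideal.mem_span_singleton_self _))
  obtain ⟨w, hw, _, hd, hwd⟩ := Submodule.mem_sup.mp (hspan ▸ hx)
  obtain ⟨d, rfl⟩ := Ideal.mem_span_singleton'.mp hd
  have hunit : IsUnit (1 - d * c) := IsLocalRing.isUnit_one_sub_self_of_mem_nonunits _
    ((mem_maximalIdeal _).mp (Ideal.mul_mem_left _ d hc))
  refine hxW ((Ideal.unit_mul_mem_iff_mem W hunit).mp ?_)
  convert hw using 1
  linear_combination -hwd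

theorem mem_span_singleton_of_mul_maximalIdeal_eq_zero (hu : u ≠ 0)
    (hess : ∀ J : Ideal A, J ≠ ⊥ → u ∈ J) {w : A} (hw : ∀ c ∈ maximalIdeal A, c * w = 0) :
    w ∈ Ideal.span {u} := by
  rcases eq_or_ne w 0 with rfl | hw0
  · exact Ideal.zero_mem _
  obtain ⟨r, hr⟩ := Ideal.mem_span_singleton'.mp
    (hess _ (by rwa [Ne, Ideal.span_singleton_eq_bot]))
  have hunit : IsUnit r := IsLocalRing.notMem_maximalIdeal.mp fun hrm ↦ hu (hr ▸ hw r hrm)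
  rw [← hr, Ideal.span_singleton_mul_left_unit hunit]
  exact Ideal.mem_span_singleton_self w

theorem CovBy.annihilator_eq_or_covBy (hu : u ≠ 0) (hess : ∀ J : Ideal A, J ≠ ⊥ → u ∈ J)
    {W V : Ideal A} (h : W ⋖ V) :
    V.annihilator = W.annihilator ∨ V.annihilator ⋖ W.annihilator := by
  obtain ⟨x, hxV, hxW⟩ := SetLike.exists_of_lt h.lt
  have hV : W ⊔ Ideal.span {x} = V :=
    (h.eq_or_eq le_sup_left (sup_le h.le ((Ideal.span_singleton_le_iff_mem V).mpr hxV))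
      ).resolve_left fun he ↦ hxW (he ▸ Ideal.mem_sup_right (Ideal.mem_span_singleton_self x))
  have hann : ∀ s ∈ W.annihilator, s * x = 0 → s ∈ V.annihilator := fun s hs hsx ↦ by
    rw [← hV, Submodule.annihilator_sup]
    exact ⟨hs, (Submodule.mem_annihilator_span_singleton x s).mpr hsx⟩
  have hsocle : ∀ s ∈ W.annihilator, ∀ c ∈ maximalIdeal A, c * (s * x) = 0 := fun s hs c hc ↦ by
    rw [mul_left_comm]
    exact Submodule.mem_annihilator.mp hs _ (h.mul_mem_of_mem_maximalIdeal hc hxV)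
  -- `s ↦ s * x` embeds `ann W / ann V` into the socle `A ∙ u`, a simple module.
  have key : ∀ s ∈ W.annihilator, ∀ t ∈ W.annihilator, t ∉ V.annihilator →
      s ∈ V.annihilator ⊔ Ideal.span {t} := by
    intro s hs t ht htV
    obtain ⟨a, ha⟩ := Ideal.mem_span_singleton'.mp (hess (Ideal.span {t * x})
      (by rw [Ne, Ideal.span_singleton_eq_bot]; exact fun htx ↦ htV (hann t ht htx)))
    obtain ⟨b, hb⟩ := Ideal.mem_span_singleton'.mp
      (mem_span_singleton_of_mul_maximalIdeal_eq_zero hu hess (hsocle s hs))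
    have hdiff : s - b * a * t ∈ V.annihilator :=
      hann _ (Submodule.sub_mem _ hs (Submodule.smul_mem _ (b * a) ht))
        (by linear_combination -hb - b * ha)
    rw [show s = (s - b * a * t) + b * a * t by ring]
    exact Submodule.add_mem_sup hdiff (Ideal.mul_mem_left _ _ (Ideal.mem_span_singleton_self t))
  refine (eq_or_ne V.annihilator W.annihilator).imp_right fun hne ↦ covBy_iff_lt_and_eq_or_eq.mpr
    ⟨(Submodule.annihilator_mono h.le).lt_of_ne hne, fun Z hVZ hZW ↦ ?_⟩
  by_cases hZ : Z ≤ V.annihilator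
  · exact Or.inl (le_antisymm hZ hVZ)
  obtain ⟨t, htZ, htV⟩ := Set.not_subset.mp hZ
  exact Or.inr (le_antisymm hZW fun s hs ↦
    sup_le hVZ ((Ideal.span_singleton_le_iff_mem Z).mpr htZ) (key s hs t (hZW htZ) htV))

variable [IsArtinianRing A]

theorem Ideal.annihilator_annihilator_eq (hu : u ≠ 0) (hess : ∀ J : Ideal A, J ≠ ⊥ → u ∈ J)
    (J : Ideal A) : J.annihilator.annihilator = J := by
  induction J using WellFoundedLT.induction with
  | _ J IH =>
  rcases eq_bot_or_bot_lt J with rfl | hJ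
  · rw [Submodule.annihilator_bot, Submodule.annihilator_top,
      Module.annihilator_eq_bot.mpr inferInstance]
  obtain ⟨K, -, hKJ⟩ := exists_le_covBy_of_lt hJ
  have hK := IH K hKJ.lt
  have hle := J.le_annihilator_annihilator
  have hcov : J.annihilator ⋖ K.annihilator :=
    (hKJ.annihilator_eq_or_covBy hu hess).resolve_left fun he ↦
      hKJ.lt.not_ge (by rw [← hK, ← he]; exact hle)
  rcases hcov.annihilator_eq_or_covBy hu hess with he | hcov'
  · exact absurd (hK ▸ he ▸ hle) hKJ.lt.not_ge
  · rw [hK] at hcov'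
    exact ((hcov'.eq_or_eq hKJ.le hle).resolve_left hKJ.lt.ne').symm

theorem Ideal.annihilator_inf (hu : u ≠ 0) (hess : ∀ J : Ideal A, J ≠ ⊥ → u ∈ J)
    (J K : Ideal A) : (J ⊓ K).annihilator = J.annihilator ⊔ K.annihilator := by
  conv_lhs => rw [← J.annihilator_annihilator_eq hu hess, ← K.annihilator_annihilator_eq hu hess,
    ← Submodule.annihilator_sup]
  exact Ideal.annihilator_annihilator_eq hu hess _

theorem IsArtinianRing.baer_self (hu : u ≠ 0) (hess : ∀ J : Ideal A, J ≠ ⊥ → u ∈ J) :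
    Module.Baer A A := by
  -- Every map from an ideal to `A` is a multiplication: for principal ideals by the double
  -- annihilator property, and for sums because `ann (N₁ ⊓ N₂) = ann N₁ + ann N₂`.
  have isMul : ∀ N : Ideal A, N.FG → ∀ g : N →ₗ[A] A, ∃ c, ∀ x : N, g x = x * c := by
    intro N hN
    induction N, hN using Submodule.fg_induction with
    | singleton b =>
      intro g
      set c := g ⟨b, Submodule.mem_span_singleton_self b⟩
      have hann : (A ∙ b).annihilator ≤ (A ∙ c).annihilator := fun r hr ↦ by
        rw [Submodule.mem_annihilator_span_singleton] at hr ⊢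
        rw [← map_smul, show r • (⟨b, _⟩ : A ∙ b) = 0 from Subtype.ext hr, map_zero]
      obtain ⟨d, hd⟩ : ∃ d, d • b = c := Submodule.mem_span_singleton.mp
        (((Ideal.le_annihilator_annihilator (A ∙ c)).trans ((Submodule.annihilator_mono hann).trans
          (Ideal.annihilator_annihilator_eq hu hess _).le)) (Submodule.mem_span_singleton_self c))
      refine ⟨d, fun ⟨x, hx⟩ ↦ ?_⟩
      obtain ⟨r, rfl⟩ := Submodule.mem_span_singleton.mp hx
      rw [show (⟨r • b, hx⟩ : A ∙ b) = r • ⟨b, Submodule.mem_span_singleton_self b⟩ from rfl,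
        map_smul]
      change r • c = _
      rw [← hd]
      simp only [smul_eq_mul, SetLike.val_smul]
      ring
    | sup N₁ N₂ _ _ ih₁ ih₂ =>
      intro g
      obtain ⟨c₁, h₁⟩ := ih₁ (g ∘ₗ Submodule.inclusion le_sup_left)
      obtain ⟨c₂, h₂⟩ := ih₂ (g ∘ₗ Submodule.inclusion le_sup_right)
      have hc : c₁ - c₂ ∈ (N₁ ⊓ N₂).annihilator := Submodule.mem_annihilator.mpr fun x hx ↦ by
        have e₁ : g ⟨x, Submodule.mem_sup_left hx.1⟩ = x * c₁ := h₁ ⟨x, hx.1⟩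
        have e₂ : g ⟨x, Submodule.mem_sup_left hx.1⟩ = x * c₂ := h₂ ⟨x, hx.2⟩
        rw [smul_eq_mul]
        linear_combination e₂ - e₁
      rw [Ideal.annihilator_inf hu hess] at hc
      obtain ⟨a₁, ha₁, a₂, ha₂, ha⟩ := Submodule.mem_sup.mp hc
      refine ⟨c₁ - a₁, fun ⟨x, hx⟩ ↦ ?_⟩
      obtain ⟨y, hy, z, hz, rfl⟩ := Submodule.mem_sup.mp hx
      have hg : g ⟨y + z, hx⟩ = y * c₁ + z * c₂ := by
        rw [← h₁ ⟨y, hy⟩, ← h₂ ⟨z, hz⟩, LinearMap.comp_apply, LinearMap.comp_apply, ← map_add]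
        rfl
      have hy₀ : a₁ * y = 0 := Submodule.mem_annihilator.mp ha₁ y hy
      have hz₀ : a₂ * z = 0 := Submodule.mem_annihilator.mp ha₂ z hz
      rw [hg]
      linear_combination z * ha + hy₀ - hz₀
  intro J g
  obtain ⟨c, hc⟩ := isMul J (IsNoetherian.noetherian J) g
  exact ⟨LinearMap.mulRight A c, fun x hx ↦ (hc ⟨x, hx⟩).symm⟩

end SelfInjective

section IrreducibleIdeal

variable {R : Type*} [CommRing R] [IsLocalRing R] {I : Ideal R} {u : R}

theorem IsIrreducibleIdeal.mem_of_lt (hI : IsIrreducibleIdeal I) (huI : u ∉ I)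
    (hu : u ∈ Submodule.colon I (maximalIdeal R)) {J : Ideal R} (hIJ : I < J) : u ∈ J := by
  by_contra huJ
  have heq : I = J ⊓ (I ⊔ Ideal.span {u}) := by
    refine le_antisymm (le_inf hIJ.le le_sup_left) fun r ⟨hrJ, hr⟩ ↦ ?_
    obtain ⟨a, ha, _, hb, rfl⟩ := Submodule.mem_sup.mp hr
    obtain ⟨b, rfl⟩ := Ideal.mem_span_singleton'.mp hb
    have hbm : b ∈ maximalIdeal R := fun hunit ↦ huJ <|
      (Ideal.unit_mul_mem_iff_mem J hunit).mp (by simpa using J.sub_mem hrJ (hIJ.le ha))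
    exact I.add_mem ha (by simpa [mul_comm] using Submodule.mem_colon.mp hu b hbm)
  rcases hI _ _ heq with h | h
  · exact hIJ.ne h
  · exact huI (h ▸ Ideal.mem_sup_right (Ideal.mem_span_singleton_self u))

theorem IsIrreducibleIdeal.mem_of_smul_mem_smul_top (hI : IsIrreducibleIdeal I) (huI : u ∉ I)
    (hu : u ∈ Submodule.colon I (maximalIdeal R)) {M : Type*} [AddCommGroup M] [Module R M]
    {y : M} (hy : u • y ∉ I • (⊤ : Submodule R M)) {r : R} (hr : r • y ∈ I • (⊤ : Submodule R M)) :
    r ∈ I := by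
  by_contra hrI
  obtain ⟨a, ha, _, hb, hab⟩ := Submodule.mem_sup.mp <| hI.mem_of_lt huI hu
    (left_lt_sup.mpr (by rwa [Ideal.span_singleton_le_iff_mem]) : I < I ⊔ Ideal.span {r})
  obtain ⟨b, rfl⟩ := Ideal.mem_span_singleton'.mp hb
  apply hy
  rw [← hab, add_smul, mul_smul]
  exact add_mem (Submodule.smul_mem_smul ha Submodule.mem_top) (Submodule.smul_mem _ b hr)

theorem IsIrreducibleIdeal.baer_quotient [IsNoetherianRing R] (hI : IsIrreducibleIdeal I)
    (hrad : I.radical = maximalIdeal R) (huI : u ∉ I)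
    (hu : u ∈ Submodule.colon I (maximalIdeal R)) : Module.Baer (R ⧸ I) (R ⧸ I) := by
  have : Nontrivial (R ⧸ I) := Ideal.Quotient.nontrivial_iff.mpr fun h ↦
    (maximalIdeal.isMaximal R).ne_top (by rw [← hrad, h, Ideal.radical_top])
  have := IsLocalRing.of_surjective' (Ideal.Quotient.mk I) Ideal.Quotient.mk_surjective
  have : IsArtinianRing (R ⧸ I) :=
    IsLocalRing.quotient_artinian_of_mem_minimalPrimes_of_isLocalRing I (by
      rw [← Ideal.radical_minimalPrimes, hrad, Ideal.minimalPrimes_eq_subsingleton_self]; rfl)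
  refine IsArtinianRing.baer_self (u := Ideal.Quotient.mk I u)
    (by rwa [Ne, Ideal.Quotient.eq_zero_iff_mem]) fun J hJ ↦
    Ideal.mem_comap.mp (hI.mem_of_lt huI hu ?_)
  refine lt_of_le_of_ne (Ideal.mk_ker.symm.trans_le (Ideal.ker_le_comap _)) fun he ↦ hJ ?_
  rw [← Ideal.map_comap_of_surjective _ Ideal.Quotient.mk_surjective J, ← he,
    Ideal.map_quotient_self]

end IrreducibleIdeal

theorem Module.Baer.exists_linearMap_quotient_apply_eq_one {R : Type*} [CommRing R] {I : Ideal R}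
    (hI : Module.Baer (R ⧸ I) (R ⧸ I)) {M : Type*} [AddCommGroup M] [Module R M] (y : M)
    (hy : ∀ r : R, r • y ∈ I • (⊤ : Submodule R M) → r ∈ I) :
    ∃ φ : M →ₗ[R] R ⧸ I, φ y = 1 := by
  let N := I • (⊤ : Submodule R M)
  let f := LinearMap.toSpanSingleton (R ⧸ I) (M ⧸ N) (N.mkQ y)
  have hf : Function.Injective f := by
    refine (injective_iff_map_eq_zero f).mpr fun a ha ↦ ?_
    obtain ⟨r, rfl⟩ := Ideal.Quotient.mk_surjective a
    rw [LinearMap.toSpanSingleton_apply, Submodule.mkQ_apply, Module.Quotient.mk_smul_mk,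
      Submodule.Quotient.mk_eq_zero] at ha
    exact Ideal.Quotient.eq_zero_iff_mem.mpr (hy r ha)
  obtain ⟨g, hg⟩ := hI.extension_property f hf LinearMap.id
  refine ⟨g.restrictScalars R ∘ₗ N.mkQ, ?_⟩
  simpa [f] using LinearMap.congr_fun hg 1

theorem Ideal.pi_mem_smul_top {R ι : Type*} [CommRing R] [Finite ι] {J : Ideal R} {v : ι → R}
    (hv : ∀ i, v i ∈ J) : v ∈ J • (⊤ : Submodule R (ι → R)) := by
  cases nonempty_fintype ι
  classical
  rw [← Finset.univ_sum_single v]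
  refine Submodule.sum_mem _ fun i _ ↦ ?_
  simpa [← Pi.single_smul] using Submodule.smul_mem_smul (hv i)
    (Submodule.mem_top (x := (Pi.single i 1 : ι → R)))

section KrullIntersection

variable {R : Type*} [CommRing R] [IsNoetherianRing R] [IsLocalRing R]

theorem Submodule.mem_of_forall_mem_sup_pow_smul_top {Q : Type*} [AddCommGroup Q] [Module R Q]
    [Module.Finite R Q] (N : Submodule R Q) {c : Q}
    (h : ∀ k : ℕ, c ∈ N ⊔ maximalIdeal R ^ k • (⊤ : Submodule R Q)) : c ∈ N := by
  rw [← Submodule.Quotient.mk_eq_zero, ← Submodule.mem_bot R,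
    ← Ideal.iInf_pow_smul_eq_bot_of_isLocalRing _ (maximalIdeal.isMaximal R).ne_top,
    Submodule.mem_iInf]
  intro k
  simpa [Submodule.map_sup, Submodule.mkQ_map_self, Submodule.map_smul'', Submodule.range_mkQ]
    using Submodule.mem_map_of_mem (f := N.mkQ) (h k)

theorem Module.Dual.exists_forall_apply_eq_of_forall_pow {F ι : Type*} [AddCommGroup F]
    [Module R F] [Finite ι] (w : ι → F) (c : ι → R)
    (h : ∀ k : ℕ, ∃ ψ : Module.Dual R F, ∀ i, ψ (w i) - c i ∈ maximalIdeal R ^ k) :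
    ∃ ψ : Module.Dual R F, ∀ i, ψ (w i) = c i := by
  let E : Module.Dual R F →ₗ[R] ι → R := LinearMap.pi fun i ↦ LinearMap.applyₗ (w i)
  obtain ⟨ψ, hψ⟩ : c ∈ LinearMap.range E :=
    Submodule.mem_of_forall_mem_sup_pow_smul_top _ fun k ↦ by
      obtain ⟨ψ, hψ⟩ := h k
      refine Submodule.mem_sup.mpr
        ⟨E ψ, ⟨ψ, rfl⟩, c - E ψ, Ideal.pi_mem_smul_top fun i ↦ ?_, by abel⟩
      simpa [E] using neg_mem (hψ i)
  exact ⟨ψ, fun i ↦ congr_fun hψ i⟩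

theorem exists_linearMap_apply_eq_one_of_forall_pow {M : Type*} [AddCommGroup M] [Module R M]
    [Module.Finite R M] (y : M)
    (h : ∀ k : ℕ, ∃ J ≤ maximalIdeal R ^ k, ∃ φ : M →ₗ[R] R ⧸ J, φ y = 1) :
    ∃ φ : M →ₗ[R] R, φ y = 1 := by
  obtain ⟨n, π, hπ⟩ := Module.Finite.exists_fin' R M
  obtain ⟨s, l, hl⟩ :=
    Submodule.fg_iff_exists_fin_generating_family.mp (IsNoetherian.noetherian (LinearMap.ker π))
  obtain ⟨ŷ, rfl⟩ := hπ y
  have hl₀ : ∀ j, π (l j) = 0 := fun j ↦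
    LinearMap.mem_ker.mp (hl ▸ Submodule.subset_span ⟨j, rfl⟩)
  -- Index `none` encodes the condition `ψ ŷ = 1`, index `some j` the relation `ψ (l j) = 0`.
  obtain ⟨ψ, hψ⟩ := Module.Dual.exists_forall_apply_eq_of_forall_pow
    (fun o : Option (Fin s) ↦ o.elim ŷ l) (fun o ↦ o.elim (1 : R) 0) fun k ↦ by
      obtain ⟨J, hJ, φ, hφ⟩ := h k
      obtain ⟨ψ, hψ⟩ := Module.projective_lifting_property J.mkQ (φ ∘ₗ π) J.mkQ_surjective
      refine ⟨ψ, fun o ↦ hJ <| (Submodule.Quotient.eq J).mp ?_⟩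
      cases o with
      | none => exact (LinearMap.congr_fun hψ ŷ).trans hφ
      | some j => exact (LinearMap.congr_fun hψ (l j)).trans (by simp [hl₀ j])
  have hker : LinearMap.ker π ≤ LinearMap.ker ψ := by
    rw [← hl, Submodule.span_le]
    rintro _ ⟨j, rfl⟩
    exact hψ (some j)
  refine ⟨(LinearMap.ker π).liftQ ψ hker ∘ₗ (π.quotKerEquivOfSurjective hπ).symm, ?_⟩
  have hsymm : (π.quotKerEquivOfSurjective hπ).symm (π ŷ) = Submodule.Quotient.mk ŷ :=
    (LinearEquiv.symm_apply_eq _).mpr rfl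
  simpa [hsymm] using hψ none

end KrullIntersection

theorem Submodule.exists_forall_notMem_of_monotone {R M : Type*} [Ring R] [AddCommGroup M]
    [Module R M] [IsNoetherian R M] {B : ℕ → Submodule R M} (hB : Monotone B)
    (h : ∀ t₀, ∃ t ≥ t₀, B t ≠ ⊤) : ∃ y, ∀ t, y ∉ B t := by
  obtain ⟨T, hT⟩ := WellFoundedGT.monotone_chain_condition ⟨B, hB⟩
  obtain ⟨t, ht, hne⟩ := h T
  obtain ⟨y, hy⟩ := not_forall.mp (mt Submodule.eq_top_iff'.mpr hne)
  refine ⟨y, fun s hs ↦ hy ?_⟩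
  have hst : B t = B (max s t) :=
    (hT t ht).symm.trans (hT _ (ht.trans (le_max_right s t)))
  exact hst.ge (hB (le_max_left s t) hs)

theorem smul_mem_smul_top_of_sub_mul_mem {R M : Type*} [CommRing R] [AddCommGroup M] [Module R M]
    {I J : Ideal R} {x u u' : R} (hx : ∀ r ∈ I, r * x ∈ J) (hu : u' - x * u ∈ J) {y : M}
    (hy : u • y ∈ I • (⊤ : Submodule R M)) : u' • y ∈ J • (⊤ : Submodule R M) := by
  have hle : I • (⊤ : Submodule R M) ≤ (J • (⊤ : Submodule R M)).comap (LinearMap.lsmul R M x) :=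
    Submodule.smul_le.mpr fun r hr m _ ↦ by
      rw [Submodule.mem_comap, LinearMap.lsmul_apply, smul_smul, mul_comm]
      exact Submodule.smul_mem_smul (hx r hr) Submodule.mem_top
  rw [← sub_add_cancel u' (x * u), add_smul, mul_smul]
  exact add_mem (Submodule.smul_mem_smul hu Submodule.mem_top) (hle hy)

theorem socle_mult_into_of_noFreeSummand_general
    (R : Type u) [CommRing R] [IsLocalRing R] [IsNoetherianRing R]
    (I : ℕ → Ideal R)
    (hprim : ∀ t, (I t).radical = maximalIdeal R)
    (hirr : ∀ t, IsIrreducibleIdeal (I t))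
    (hcof : ∀ n : ℕ, ∃ t₀, ∀ t ≥ t₀, I t ≤ maximalIdeal R ^ n)
    (u : ℕ → R)
    (husoc : ∀ t, u t ∉ I t ∧
      Submodule.colon (I t) (maximalIdeal R) = I t ⊔ Ideal.span {u t})
    (x : ℕ → R)
    (hinj : ∀ t, ∀ r : R, r ∈ I t ↔ r * x t ∈ I (t + 1))
    (hu : ∀ t, u (t + 1) - x t * u t ∈ I (t + 1))
    (M : Type u) [AddCommGroup M] [Module R M] [Module.Finite R M]
    (hM : NoFreeSummand R M) :
    ∃ t₀ > 0, ∀ t ≥ t₀, ∀ y : M, u t • y ∈ I t • (⊤ : Submodule R M) := by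
  have hsoc : ∀ t, u t ∈ Submodule.colon (I t) (maximalIdeal R) := fun t ↦
    (husoc t).2 ▸ Ideal.mem_sup_right (Ideal.mem_span_singleton_self _)
  let B : ℕ → Submodule R M := fun t ↦
    (I t • (⊤ : Submodule R M)).comap (LinearMap.lsmul R M (u t))
  have hB : Monotone B := monotone_nat_of_le_succ fun t _ hy ↦
    smul_mem_smul_top_of_sub_mul_mem (fun r ↦ (hinj t r).mp) (hu t) hy
  by_contra hcon
  obtain ⟨y, hy⟩ := Submodule.exists_forall_notMem_of_monotone hB fun t₀ ↦ by
    push Not at hcon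
    obtain ⟨t, ht, z, hz⟩ := hcon (t₀ + 1) t₀.succ_pos
    exact ⟨t, by omega, fun hBt ↦ hz (hBt ▸ Submodule.mem_top : z ∈ B t)⟩
  obtain ⟨φ, hφ⟩ := exists_linearMap_apply_eq_one_of_forall_pow y fun k ↦ by
    obtain ⟨t, ht⟩ := hcof k
    have hbaer := (hirr t).baer_quotient (hprim t) (husoc t).1 (hsoc t)
    exact ⟨I t, ht t le_rfl, hbaer.exists_linearMap_quotient_apply_eq_one y fun r ↦
      (hirr t).mem_of_smul_mem_smul_top (husoc t).1 (hsoc t) (hy t)⟩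
  exact hM ⟨φ, fun r ↦ ⟨r • y, by rw [map_smul, hφ, smul_eq_mul, mul_one]⟩⟩

/-- **Aberbach–Leuschke, Proposition 1.6.**  Let `(R, m)` be an approximately Gorenstein
Noetherian local ring with a sequence `{I_t}` of `m`-primary irreducible ideals cofinal with
the powers of `m`, injections `R/I_t → R/I_{t+1}` (multiplication by `x_t`) sending socle
generator to socle generator, and `u_t` a representative of a socle generator of `R/I_t`.
If `M` is a finitely generated `R`-module with no nonzero free direct summand, then there is
`t₀ > 0` with `u_t M ⊆ I_t M` for all `t ≥ t₀`. -/
theorem socle_mult_into_of_noFreeSummand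
    (R : Type u) [CommRing R] [IsLocalRing R] [IsNoetherianRing R]
    (hAG : IsApproximatelyGorenstein R)
    (I : ℕ → Ideal R)
    (hprim : ∀ t, (I t).radical = maximalIdeal R)
    (hirr : ∀ t, IsIrreducibleIdeal (I t))
    (hcof : ∀ n : ℕ, ∃ t₀, ∀ t ≥ t₀, I t ≤ maximalIdeal R ^ n)
    (u : ℕ → R)
    (husoc : ∀ t, u t ∉ I t ∧
      Submodule.colon (I t) (maximalIdeal R) = I t ⊔ Ideal.span {u t})
    (x : ℕ → R)
    (hinj : ∀ t, ∀ r : R, r ∈ I t ↔ r * x t ∈ I (t + 1))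
    (hu : ∀ t, u (t + 1) - x t * u t ∈ I (t + 1))
    (M : Type u) [AddCommGroup M] [Module R M] [Module.Finite R M]
    (hM : NoFreeSummand R M) :
    ∃ t₀ > 0, ∀ t ≥ t₀, ∀ y : M, u t • y ∈ I t • (⊤ : Submodule R M) :=
  socle_mult_into_of_noFreeSummand_general R I hprim hirr hcof u husoc x hinj hu M hM
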